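/- arXiv:2306.02012 — 5 statements merged into one kernel-verified Lean document; each statement's English description precedes it below -/
import Mathlib

section
/- Let M be a discretely ordered ring that is an integer part of an ordered field R (i.e., M ⊆ R and every r in R has some m in M with m ≤ r < m + 1). Then the quotient field of M, viewed inside R, is dense in R: for all a < b in R there exists q in F(M) with a < q < b. -/
namespace Subring

variable {R : Type*} [Field R] [LinearOrder R] [IsStrictOrderedRing R]

def IsIntegerPart (M : Subring R) : Prop :=
  ∀ r : R, ∃ m ∈ M, m ≤ r ∧ r < m + 1

variable {M : Subring R}

theorem IsIntegerPart.exists_mem_lt_le_add_one (hM : M.IsIntegerPart) (r : R) :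
    ∃ m ∈ M, r < m ∧ m ≤ r + 1 := by
  obtain ⟨m, hm, hmr, hrm⟩ := hM r
  exact ⟨m + 1, M.add_mem hm M.one_mem, hrm, by linarith⟩

theorem IsIntegerPart.exists_mem_pos_inv_lt (hM : M.IsIntegerPart) {ε : R} (hε : 0 < ε) :
    ∃ k ∈ M, 0 < k ∧ k⁻¹ < ε := by
  obtain ⟨k, hk, hεk, -⟩ := hM.exists_mem_lt_le_add_one ε⁻¹
  have hk_pos : 0 < k := (inv_pos.mpr hε).trans hεk
  exact ⟨k, hk, hk_pos, (inv_lt_comm₀ hk_pos hε).mpr hεk⟩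

/-- Given a denominator `k` with `k⁻¹ < b - a`, the least numerator `p` with `a < p / k`
still has `p / k ≤ a + k⁻¹ < b`. -/
theorem IsIntegerPart.exists_div_mem_Ioo (hM : M.IsIntegerPart) {a b : R} (hab : a < b) :
    ∃ p ∈ M, ∃ k ∈ M, 0 < k ∧ a < p / k ∧ p / k < b := by
  obtain ⟨k, hk, hk_pos, hk_inv⟩ := hM.exists_mem_pos_inv_lt (sub_pos.mpr hab)
  obtain ⟨p, hp, hap, hpa⟩ := hM.exists_mem_lt_le_add_one (k * a)
  refine ⟨p, hp, k, hk, hk_pos, (lt_div_iff₀' hk_pos).mpr hap, ?_⟩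
  calc p / k ≤ (k * a + 1) / k := div_le_div_of_nonneg_right hpa hk_pos.le
    _ = a + k⁻¹ := by field_simp
    _ < b := by linarith

end Subring

theorem stmt1_general {R : Type*} [Field R] [LinearOrder R] [IsStrictOrderedRing R] (M : Subring R)
    (hIP : ∀ r : R, ∃ m ∈ M, m ≤ r ∧ r < m + 1) :
    ∀ a b : R, a < b → ∃ p ∈ M, ∃ k ∈ M, 0 < k ∧ a < p / k ∧ p / k < b :=
  fun _ _ hab => Subring.IsIntegerPart.exists_div_mem_Ioo hIP hab

/-- If a discretely ordered subring `M` of an ordered field `R` is an integer part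
of `R`, then the quotient field of `M` (quotients of elements of `M`, viewed inside
`R`) is dense in `R`. -/
theorem stmt1 {R : Type*} [Field R] [LinearOrder R] [IsStrictOrderedRing R] (M : Subring R)
    (hdisc : ∀ m ∈ M, 0 < m → (1 : R) ≤ m)
    (hIP : ∀ r : R, ∃ m ∈ M, m ≤ r ∧ r < m + 1) :
    ∀ a b : R, a < b → ∃ p ∈ M, ∃ k ∈ M, 0 < k ∧ a < p / k ∧ p / k < b :=
  stmt1_general M hIP
end

section
/- Let a, b, x, y be natural numbers with a > 0, b > 0, y > 0 and x ≥ y. Then the inequality (1 + a/b)^(x/y) ≥ 1 + a·x/(b·y), stated with y-th powers, holds in the natural numbers, namely (b + a)^x · (b·y)^y ≥ (b·y + a·x)^y · b^x. -/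
open Real in
lemma stmt5_real (a b x y : ℝ) (ha : 0 < a) (hb : 0 < b) (hy : 0 < y) (hxy : y ≤ x)
    (n m : ℕ) (hn : (n : ℝ) = x) (hm : (m : ℝ) = y) :
    (b * y + a * x) ^ m * b ^ n ≤ (b + a) ^ n * (b * y) ^ m := by
  have hx : 0 < x := hy.trans_le hxy
  have hab : (0:ℝ) < a / b := div_pos ha hb
  have h1 : 1 + (x / y) * (a / b) ≤ (1 + a / b) ^ (x / y) :=
    one_add_mul_self_le_rpow_one_add (by linarith) ((one_le_div hy).2 hxy)
  have hL : (0:ℝ) ≤ 1 + (x / y) * (a / b) := by positivity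
  have h2 : (1 + (x / y) * (a / b)) ^ m ≤ ((1 + a / b) ^ (x / y)) ^ m :=
    pow_le_pow_left₀ hL h1 m
  have h3 : ((1 + a / b) ^ (x / y)) ^ m = (1 + a / b) ^ n := by
    rw [← rpow_natCast ((1 + a / b) ^ (x / y)) m, ← rpow_mul (by positivity), hm,
      div_mul_cancel₀ _ hy.ne', ← hn, rpow_natCast]
  rw [h3] at h2
  have hby : (0:ℝ) < b * y := by positivity
  have e1 : 1 + (x / y) * (a / b) = (b * y + a * x) / (b * y) := by
    field_simp
  have e2 : 1 + a / b = (b + a) / b := by field_simp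
  rw [e1, e2, div_pow, div_pow, div_le_div_iff₀ (by positivity) (by positivity)] at h2
  linarith [h2]

/-- Axiom (T11) of `T_{x^y}` verified in the natural numbers: the polynomial form
of the Bernoulli inequality `(1 + a/b)^(x/y) ≥ 1 + a·x/(b·y)`, namely
`(b + a)^x · (b·y)^y ≥ (b·y + a·x)^y · b^x`, for `a, b > 0`, `y > 0`, `x ≥ y`. -/
theorem stmt5 (a b x y : ℕ) (ha : 0 < a) (hb : 0 < b) (hy : 0 < y) (hxy : y ≤ x) :
    (b * y + a * x) ^ y * b ^ x ≤ (b + a) ^ x * (b * y) ^ y := by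
  have := stmt5_real a b x y (by exact_mod_cast ha) (by exact_mod_cast hb)
    (by exact_mod_cast hy) (by exact_mod_cast hxy) x y rfl rfl
  exact_mod_cast this
end

section
/- Let R be a linearly ordered exponential field satisfying the extreme value scheme for exponential terms (every term attains a maximum on every closed segment), with exp(1) = 2. Then exp(x) ≥ x for all x ≥ 0 in R. -/
/-! Suppose `exp x < x` for some `x ≥ 0` and let `z` maximise `w - exp w` on `[0, x]`.
Then `z - exp z > 0`, so `z > exp z ≥ 1` and `z - 1` still lies in `[0, x]`. Maximality
against `z - 1` gives `exp z - exp (z - 1) ≤ 1`; since `exp z = 2 exp (z - 1)` this says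
`exp (z - 1) ≤ 1`, i.e. `z ≤ 1`, a contradiction. -/

theorem map_zero_eq_one_of_map_add_eq_mul {α M : Type*} [AddZeroClass α] [MonoidWithZero M]
    [IsLeftCancelMulZero M] {f : α → M} (hadd : ∀ x y, f (x + y) = f x * f y) {a : α}
    (ha : f a ≠ 0) : f 0 = 1 := by
  have h := hadd a 0
  rw [add_zero] at h
  exact (mul_eq_left₀ ha).mp h.symm

section ExponentialField

variable {R : Type*} [Field R] [LinearOrder R] [IsStrictOrderedRing R] {exp : R → R}

theorem map_zero_eq_one_of_map_one_eq_two (hadd : ∀ x y, exp (x + y) = exp x * exp y)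
    (hone : exp 1 = 2) : exp 0 = 1 :=
  map_zero_eq_one_of_map_add_eq_mul hadd (a := 1) (by simp [hone])

theorem le_one_of_isMaxOn_sub_exp (hadd : ∀ x y, exp (x + y) = exp x * exp y)
    (hone : exp 1 = 2) (hmono : StrictMono exp) {s : Set R} {z : R}
    (hz : IsMaxOn (fun w => w - exp w) s z) (hz₁ : z - 1 ∈ s) : z ≤ 1 := by
  have hexp_z : exp z = 2 * exp (z - 1) := by
    rw [← hone, ← hadd, add_sub_cancel]
  have hmax : z - 1 - exp (z - 1) ≤ z - exp z := hz hz₁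
  have hle : exp (z - 1) ≤ exp 0 := by
    linarith [map_zero_eq_one_of_map_one_eq_two hadd hone]
  linarith [hmono.le_iff_le.mp hle]

end ExponentialField

theorem stmt10_general {R : Type*} [Field R] [LinearOrder R] [IsStrictOrderedRing R] (exp : R → R)
    (hmono : StrictMono exp)
    (hadd : ∀ x y, exp (x + y) = exp x * exp y)
    (hone : exp 1 = 2)
    (hmax : ∀ u v : R, u ≤ v → ∃ z ∈ Set.Icc u v, ∀ w ∈ Set.Icc u v,
      w - exp w ≤ z - exp z) :
    ∀ x : R, 0 ≤ x → x ≤ exp x := by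
  intro x hx
  by_contra! hlt
  obtain ⟨z, ⟨hz₀, hzx⟩, hzmax⟩ := hmax 0 x hx
  have hz_gt : exp z < z := by linarith [hzmax x ⟨hx, le_rfl⟩]
  have hexp_z : 1 ≤ exp z := by
    rw [← map_zero_eq_one_of_map_one_eq_two hadd hone]
    exact hmono.monotone hz₀
  have hz₁ : z - 1 ∈ Set.Icc 0 x := ⟨by linarith, by linarith⟩
  linarith [le_one_of_isMaxOn_sub_exp hadd hone hmono (s := Set.Icc 0 x) hzmax hz₁]

/-- In an exponential field satisfying the extreme value property for the term
`x - exp x` on closed segments, with `exp 1 = 2` and `exp n = 2^n ≥ n + 1` for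
standard naturals, one has `exp x ≥ x` for all `x ≥ 0`. -/
theorem stmt10 {R : Type*} [Field R] [LinearOrder R] [IsStrictOrderedRing R] (exp : R → R)
    (hpos : ∀ x, 0 < exp x) (hmono : StrictMono exp)
    (hadd : ∀ x y, exp (x + y) = exp x * exp y)
    (hsurj : ∀ z : R, 0 < z → ∃ x, exp x = z)
    (hone : exp 1 = 2)
    (hmax : ∀ u v : R, u ≤ v → ∃ z ∈ Set.Icc u v, ∀ w ∈ Set.Icc u v,
      w - exp w ≤ z - exp z)
    (hnat : ∀ n : ℕ, (n : R) + 1 ≤ exp (n : R)) :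
    ∀ x : R, 0 ≤ x → x ≤ exp x :=
  stmt10_general exp hmono hadd hone hmax
end

section
/- Let F be an ordered field in which every element has an integer part with respect to a discretely ordered subring M (i.e., M ⊆^{IP} F), and let K be the field of equivalence classes of M-indexed Cauchy sequences from F (Cauchy completion with moduli indexed by M^+). Then M is an integer part of K: every Cauchy class a has m ∈ M with m ≤ a < m + 1. -/
section

variable {M F : Type*} [CommRing M] [LinearOrder M] [IsStrictOrderedRing M]
  [Field F] [LinearOrder F] [IsStrictOrderedRing F]

/-- `a : M⁺ → F` is an `M`-Cauchy sequence (indices range over nonnegative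
elements of `M`, embedded into `F` via `f`). -/
def MCauchy (f : M →+* F) (a : M → F) : Prop :=
  ∀ k : M, 0 < k → ∃ N : M, 0 ≤ N ∧ ∀ n m : M, N < n → N < m →
    |a n - a m| < 1 / f k

/-- Strict order on (representatives of) classes of `M`-Cauchy sequences. -/
def MSeqLt (f : M →+* F) (a b : M → F) : Prop :=
  ∃ k : M, 0 < k ∧ ∃ N : M, 0 ≤ N ∧ ∀ n : M, N < n → a n + 1 / f k < b n

/-- Equivalence of `M`-Cauchy sequences. -/
def MSeqEquiv (f : M →+* F) (a b : M → F) : Prop :=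
  ∀ k : M, 0 < k → ∃ N : M, 0 ≤ N ∧ ∀ n : M, N < n → |a n - b n| < 1 / f k

/-! A Cauchy sequence is eventually within `1/4` of one of its terms `c`; if `m` is the
integer part of `c`, comparing `[a]` with the constants `m` and `m + 1` shows that one of
`m - 1`, `m`, `m + 1` is the integer part of `[a]`. -/

namespace MCauchy

variable {f : M →+* F} {a : M → F}

theorem seqLt_const_or_const_le (hf : StrictMono f) (ha : MCauchy f a) (x : F) :
    MSeqLt f a (fun _ => x) ∨
      MSeqLt f (fun _ => x) a ∨ MSeqEquiv f (fun _ => x) a := by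
  by_cases hequiv : MSeqEquiv f (fun _ => x) a
  · exact Or.inr (Or.inr hequiv)
  simp only [MSeqEquiv, not_forall, not_exists, not_and, not_lt] at hequiv
  obtain ⟨k, hk, hfar⟩ := hequiv
  have hfk : 0 < f k := by simpa using hf hk
  have hhalf : 1 / f (2 * k) + 1 / f (2 * k) = 1 / f k := by
    rw [map_mul, map_ofNat]; field_simp; ring
  obtain ⟨N, hN, hcauchy⟩ := ha (2 * k) (by positivity)
  -- one tail term at distance `≥ 1/f k` from `x` keeps the whole `1/f (2k)`-tail on its side
  obtain ⟨n₀, hn₀, hgap⟩ := hfar N hN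
  rcases le_abs'.mp hgap with habove | hbelow
  · refine Or.inr (Or.inl ⟨2 * k, by positivity, N, hN, fun n hn => ?_⟩)
    have := (abs_lt.mp (hcauchy n n₀ hn hn₀)).1
    linarith
  · refine Or.inl ⟨2 * k, by positivity, N, hN, fun n hn => ?_⟩
    have := (abs_lt.mp (hcauchy n n₀ hn hn₀)).2
    linarith

end MCauchy

theorem stmt17_general (f : M →+* F) (hf : StrictMono f)
    (hIP : ∀ r : F, ∃ m : M, f m ≤ r ∧ r < f m + 1)
    (a : M → F) (ha : MCauchy f a) :
    ∃ m : M, (MSeqLt f (fun _ => f m) a ∨ MSeqEquiv f (fun _ => f m) a) ∧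
      MSeqLt f a (fun _ => f m + 1) := by
  obtain ⟨N, hN, hcauchy⟩ := ha 4 (by norm_num)
  obtain ⟨m, hmc, hcm⟩ := hIP (a (N + 1))
  have hnear : ∀ n, N < n → f m - 1 / 4 < a n ∧ a n < f m + 5 / 4 := fun n hn => by
    have := abs_lt.mp (hcauchy n (N + 1) hn (lt_add_one N))
    rw [map_ofNat] at this
    constructor <;> linarith
  have hf2 : f 2 = 2 := map_ofNat f 2
  rcases ha.seqLt_const_or_const_le hf (f m) with hlt | hge
  · refine ⟨m - 1, Or.inl ⟨2, two_pos, N, hN, fun n hn => ?_⟩, by simpa using hlt⟩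
    rw [map_sub, map_one, hf2]
    linarith [(hnear n hn).1]
  rcases ha.seqLt_const_or_const_le hf (f m + 1) with hlt | hge'
  · exact ⟨m, hge, hlt⟩
  · refine ⟨m + 1, by simpa using hge', 2, two_pos, N, hN, fun n hn => ?_⟩
    rw [map_add, map_one, hf2]
    linarith [(hnear n hn).2]

/-- If the discretely ordered ring `M` is an integer part of its ordered quotient
field `F` (realized by an order-preserving embedding `f : M →+* F` whose
quotients exhaust `F`), then `M` is an integer part of the `M`-indexed Cauchy
completion `K` of `F`: for every `M`-Cauchy sequence `a` there is `m ∈ M` with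
`m ≤ [a] < m + 1` in the order of `K`. -/
theorem stmt17 (f : M →+* F) (hf : StrictMono f)
    (hdisc : ∀ m : M, 0 < m → 1 ≤ m)
    (hquot : ∀ r : F, ∃ n k : M, 0 < k ∧ r = f n / f k)
    (hIP : ∀ r : F, ∃ m : M, f m ≤ r ∧ r < f m + 1)
    (a : M → F) (ha : MCauchy f a) :
    ∃ m : M, (MSeqLt f (fun _ => f m) a ∨ MSeqEquiv f (fun _ => f m) a) ∧
      MSeqLt f a (fun _ => f m + 1) :=
  stmt17_general f hf hIP a ha

end
end

section
/- Let K be a linearly ordered field, exp : K → K^{>0} an order-preserving isomorphism from (K,+) to (K^{>0},·) such that exp(1/k) ≤ 1 + 1/k for all k in a cofinal set of positive elements of a subring M ⊆ K. Then exp is continuous (in the ε-δ sense with ε, δ from K), and its inverse log is continuous. -/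
/-!
Continuity of `exp` at `x₀` reduces, via `exp x - exp x₀ = exp x₀ * (exp (x - x₀) - 1)`, to
continuity at `0`. There the bound `exp h ≤ 1 + h` for arbitrarily small `h = 1/k > 0` squeezes
`exp t` for `|t| < h` between `exp (-h) = (exp h)⁻¹ ≥ (1 + h)⁻¹ ≥ 1 - h` and `1 + h`.
For `log`, monotonicity of `exp` alone shows that `log y` lies within `ε` of `log y₀` as soon as
`y` lies strictly between `exp (log y₀ - ε)` and `exp (log y₀ + ε)`.
-/

lemma map_zero_eq_one_of_map_add {A M₀ : Type*} [AddZeroClass A] [MonoidWithZero M₀]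
    [IsLeftCancelMulZero M₀] {exp : A → M₀} (h0 : exp 0 ≠ 0)
    (hadd : ∀ x y, exp (x + y) = exp x * exp y) : exp 0 = 1 :=
  (mul_eq_left₀ h0).mp (by rw [← hadd, add_zero])

lemma map_neg_eq_inv_of_map_add {A G₀ : Type*} [AddGroup A] [GroupWithZero G₀] {exp : A → G₀}
    (h0 : exp 0 ≠ 0) (hadd : ∀ x y, exp (x + y) = exp x * exp y) (x : A) :
    exp (-x) = (exp x)⁻¹ :=
  eq_inv_of_mul_eq_one_right <| by
    rw [← hadd, add_neg_cancel, map_zero_eq_one_of_map_add h0 hadd]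

section OrderedField

variable {K : Type*} [Field K] [LinearOrder K] [IsStrictOrderedRing K]

lemma one_sub_le_inv_of_le_one_add {a h : K} (ha : 0 < a) (hah : a ≤ 1 + h) : 1 - h ≤ a⁻¹ := by
  rw [← one_div, le_div_iff₀ ha]
  nlinarith [sq_nonneg h]

variable {exp : K → K}

lemma abs_map_sub_one_le (hpos : ∀ x, 0 < exp x) (hmono : StrictMono exp)
    (hadd : ∀ x y, exp (x + y) = exp x * exp y) {h t : K} (hh : exp h ≤ 1 + h) (ht : |t| < h) :
    |exp t - 1| ≤ h := by
  obtain ⟨hlt, hgt⟩ := abs_lt.mp ht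
  have hlower : 1 - h ≤ exp t :=
    calc 1 - h ≤ (exp h)⁻¹ := one_sub_le_inv_of_le_one_add (hpos h) hh
      _ = exp (-h) := (map_neg_eq_inv_of_map_add (hpos 0).ne' hadd h).symm
      _ ≤ exp t := (hmono hlt).le
  rw [abs_le]
  constructor <;> linarith [hmono hgt]

lemma exists_delta_abs_map_sub_lt (hpos : ∀ x, 0 < exp x) (hmono : StrictMono exp)
    (hadd : ∀ x y, exp (x + y) = exp x * exp y)
    (hsmall : ∀ ε, 0 < ε → ∃ h, 0 < h ∧ h < ε ∧ exp h ≤ 1 + h) (x₀ : K) {ε : K} (hε : 0 < ε) :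
    ∃ δ, 0 < δ ∧ ∀ x, |x - x₀| < δ → |exp x - exp x₀| < ε := by
  obtain ⟨h, hh0, hhε, hh⟩ := hsmall (ε / exp x₀) (div_pos hε (hpos x₀))
  refine ⟨h, hh0, fun x hx => ?_⟩
  have hsplit : exp x = exp x₀ * exp (x - x₀) := by rw [← hadd, add_sub_cancel]
  calc |exp x - exp x₀| = exp x₀ * |exp (x - x₀) - 1| := by
        rw [hsplit, ← mul_sub_one, abs_mul, abs_of_pos (hpos x₀)]
    _ ≤ exp x₀ * h :=
        mul_le_mul_of_nonneg_left (abs_map_sub_one_le hpos hmono hadd hh hx) (hpos x₀).le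
    _ < ε := by rwa [lt_div_iff₀' (hpos x₀)] at hhε

end OrderedField

lemma StrictMono.exists_delta_abs_sub_lt_of_rightInvOn {α β : Type*} [AddCommGroup α]
    [LinearOrder α] [IsOrderedAddMonoid α] [AddCommGroup β] [LinearOrder β] [IsOrderedAddMonoid β]
    {f : α → β} {g : β → α} {s : Set β} (hf : StrictMono f) (hfg : Set.RightInvOn g f s)
    {y₀ : β} (hy₀ : y₀ ∈ s) {ε : α} (hε : 0 < ε) :
    ∃ δ, 0 < δ ∧ ∀ y ∈ s, |y - y₀| < δ → |g y - g y₀| < ε := by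
  have hup : y₀ < f (g y₀ + ε) := (hfg hy₀).symm.trans_lt (hf (lt_add_of_pos_right _ hε))
  have hdown : f (g y₀ - ε) < y₀ := (hf (sub_lt_self _ hε)).trans_eq (hfg hy₀)
  refine ⟨min (f (g y₀ + ε) - y₀) (y₀ - f (g y₀ - ε)), by simp [hup, hdown], fun y hy hyδ => ?_⟩
  obtain ⟨hyup, hydown⟩ := lt_min_iff.mp hyδ
  rw [abs_sub_lt_iff, ← hfg hy] at hyup hydown
  have hlt : g y < g y₀ + ε := hf.lt_iff_lt.mp ((sub_lt_sub_iff_right _).mp hyup.1)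
  have hgt : g y₀ - ε < g y := hf.lt_iff_lt.mp ((sub_lt_sub_iff_left _).mp hydown.2)
  rw [abs_sub_lt_iff, sub_lt_iff_lt_add', sub_lt_comm]
  exact ⟨hlt, hgt⟩

theorem stmt18_general {K : Type*} [Field K] [LinearOrder K] [IsStrictOrderedRing K] (M : Subring K)
    (hcofinal : ∀ x : K, ∃ k ∈ M, 0 < k ∧ x < k)
    (exp log : K → K)
    (hpos : ∀ x, 0 < exp x) (hmono : StrictMono exp)
    (hadd : ∀ x y, exp (x + y) = exp x * exp y)
    (hlog₂ : ∀ y : K, 0 < y → exp (log y) = y)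
    (hk : ∀ k ∈ M, 0 < k → exp (1 / k) ≤ 1 + 1 / k) :
    (∀ x₀ : K, ∀ ε : K, 0 < ε → ∃ δ : K, 0 < δ ∧ ∀ x : K,
      |x - x₀| < δ → |exp x - exp x₀| < ε) ∧
    (∀ y₀ : K, 0 < y₀ → ∀ ε : K, 0 < ε → ∃ δ : K, 0 < δ ∧ ∀ y : K, 0 < y →
      |y - y₀| < δ → |log y - log y₀| < ε) := by
  have hsmall : ∀ ε : K, 0 < ε → ∃ h, 0 < h ∧ h < ε ∧ exp h ≤ 1 + h := by
    intro ε hε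
    obtain ⟨k, hkM, hk0, hεk⟩ := hcofinal (1 / ε)
    exact ⟨1 / k, by positivity, (one_div_lt hε hk0).mp hεk, hk k hkM hk0⟩
  exact ⟨fun x₀ ε hε => exists_delta_abs_map_sub_lt hpos hmono hadd hsmall x₀ hε,
    fun y₀ hy₀ ε hε => hmono.exists_delta_abs_sub_lt_of_rightInvOn (s := Set.Ioi 0) hlog₂ hy₀ hε⟩

/-- Let `K` be a linearly ordered field, `M ⊆ K` a discretely ordered subring
whose positive elements are cofinal in `K`, and `exp` an order-preserving
isomorphism `(K,+) → (K^{>0},·)` with `exp (1/k) ≤ 1 + 1/k` for all positive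
`k ∈ M`. Then `exp` is continuous and its inverse `log` is continuous on
`K^{>0}` (in the ε-δ sense internal to `K`). -/
theorem stmt18 {K : Type*} [Field K] [LinearOrder K] [IsStrictOrderedRing K] (M : Subring K)
    (hdisc : ∀ m ∈ M, 0 < m → (1 : K) ≤ m)
    (hcofinal : ∀ x : K, ∃ k ∈ M, 0 < k ∧ x < k)
    (exp log : K → K)
    (hpos : ∀ x, 0 < exp x) (hmono : StrictMono exp)
    (hadd : ∀ x y, exp (x + y) = exp x * exp y)
    (hlog₁ : ∀ x, log (exp x) = x) (hlog₂ : ∀ y : K, 0 < y → exp (log y) = y)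
    (hk : ∀ k ∈ M, 0 < k → exp (1 / k) ≤ 1 + 1 / k) :
    (∀ x₀ : K, ∀ ε : K, 0 < ε → ∃ δ : K, 0 < δ ∧ ∀ x : K,
      |x - x₀| < δ → |exp x - exp x₀| < ε) ∧
    (∀ y₀ : K, 0 < y₀ → ∀ ε : K, 0 < ε → ∃ δ : K, 0 < δ ∧ ∀ y : K, 0 < y →
      |y - y₀| < δ → |log y - log y₀| < ε) :=
  stmt18_general M hcofinal exp log hpos hmono hadd hlog₂ hk
end
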